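/- Rotation preserving zero loading restrictions (IZ can be imposed without loss of generality): let f_t = (g_t', h_t')' ∈ R^{r_1+r_2} for t=1,…,T, let Γ = (Γ^g, Γ^h) be an m×(r_1+r_2) loading matrix whose first row-block corresponding to the y equation has the form λ_i = (ψ_i', 0_{r_2}')' (i.e., the loadings of h_t in the y equation are zero), and let Σ be m×m symmetric positive definite. Assume the sample covariance M_{ff} of (f_t) is positive definite and that the relevant symmetric matrices below have distinct eigenvalues. Then there exists an invertible (r_1+r_2)×(r_1+r_2) matrix A such that, setting Γ^⋆ = Γ A^{-1} and f_t^⋆ = A(f_t − f̄), one has: (i) Γ f_t = Γ f̄ + Γ^⋆ f_t^⋆; (ii) the loadings of the transformed h-factors in the y equation remain zero (the zero block Φ = 0 is preserved); (iii) T^{-1}Σ_t f_t^⋆ = 0 and T^{-1}Σ_t f_t^⋆ f_t^{⋆'} = I_{r_1+r_2}; and (iv) m^{-1}Γ^{g⋆'}Σ^{-1}Γ^{g⋆} and m^{-1}Γ^{h⋆'}Σ^{-1}Γ^{h⋆} are diagonal with distinct descending diagonal entries, where Γ^{g⋆}, Γ^{h⋆} are the blocks of Γ^⋆ corresponding to the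 transformed g- and h-factors. -/

import Mathlib

/-!
STATEMENT 14: Rotation preserving zero loading restrictions (IZ can be imposed
without loss of generality).  For factors f_t = (g_t', h_t')' ∈ ℝ^{r₁+r₂} with positive
definite sample covariance and a loading matrix Γ whose y-equation rows have zero
h-block, there is an invertible A such that Γ⋆ = Γ A⁻¹ and f⋆_t = A(f_t − f̄) satisfy:
(i) Γ f_t = Γ f̄ + Γ⋆ f⋆_t; (ii) rows of Γ with zero h-block keep a zero h-block in Γ⋆;
(iii) zero sample mean and identity sample covariance of f⋆; (iv) m⁻¹Γ^{g⋆}'Σ⁻¹Γ^{g⋆}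
and m⁻¹Γ^{h⋆}'Σ⁻¹Γ^{h⋆} diagonal with distinct descending diagonal entries.
The genericity assumption ("the relevant symmetric matrices have distinct
eigenvalues") is expressed as the existence of spectral decompositions with strictly
descending eigenvalues for the two matrices arising from the explicit block-Cholesky
whitening step of the construction.
-/

open Matrix BigOperators

noncomputable section

/-- Sample mean of the factors. -/
def fbar {T r : ℕ} (f : Fin T → Fin r → ℝ) : Fin r → ℝ :=
  (T : ℝ)⁻¹ • ∑ t, f t

/-- Sample covariance matrix `M_ff` of the factors. -/
def Mff {T r : ℕ} (f : Fin T → Fin r → ℝ) : Matrix (Fin r) (Fin r) ℝ :=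
  (T : ℝ)⁻¹ • ∑ t, Matrix.of fun a b => (f t a - fbar f a) * (f t b - fbar f b)

/-- Diagonal with distinct diagonal entries arranged in descending order. -/
def DiagDistinctDesc {n : ℕ} (A : Matrix (Fin n) (Fin n) ℝ) : Prop :=
  ∃ d : Fin n → ℝ, (∀ a b : Fin n, a < b → d b < d a) ∧ A = Matrix.diagonal d

/-- Spectral decomposition with strictly descending (hence distinct) eigenvalues;
for a symmetric matrix this says exactly that all eigenvalues are distinct. -/
def HasDistinctEigen {n : ℕ} (A : Matrix (Fin n) (Fin n) ℝ) : Prop :=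
  ∃ (U : Matrix (Fin n) (Fin n) ℝ) (d : Fin n → ℝ),
    U * Uᵀ = 1 ∧ Uᵀ * U = 1 ∧ (∀ a b : Fin n, a < b → d b < d a) ∧
    A = U * Matrix.diagonal d * Uᵀ

/-- The positive semidefinite square root of a positive semidefinite matrix
(the definition of `Matrix.PosSemidef.sqrt` in the older Mathlib). -/
def psdSqrt {n : Type*} [Fintype n] [DecidableEq n] {A : Matrix n n ℝ} (hA : A.PosSemidef) :
    Matrix n n ℝ :=
  (hA.1.eigenvectorUnitary : Matrix n n ℝ) * Matrix.diagonal ((√·) ∘ hA.1.eigenvalues) *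
    (star hA.1.eigenvectorUnitary : Matrix n n ℝ)

section

variable {T m r₁ r₂ : ℕ} (f : Fin T → Fin (r₁ + r₂) → ℝ)

/-- `M_gg` block of the sample covariance. -/
def Mgg : Matrix (Fin r₁) (Fin r₁) ℝ :=
  (Mff f).submatrix (Fin.castAdd r₂) (Fin.castAdd r₂)

/-- `M_hg` block of the sample covariance. -/
def Mhg : Matrix (Fin r₂) (Fin r₁) ℝ :=
  (Mff f).submatrix (Fin.natAdd r₁) (Fin.castAdd r₂)

/-- `M_hh` block of the sample covariance. -/
def Mhh : Matrix (Fin r₂) (Fin r₂) ℝ :=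
  (Mff f).submatrix (Fin.natAdd r₁) (Fin.natAdd r₁)

/-- Schur complement `M_hh − M_hg M_gg⁻¹ M_gh`. -/
def MhhG : Matrix (Fin r₂) (Fin r₂) ℝ :=
  Mhh f - Mhg f * (Mgg f)⁻¹ * (Mhg f)ᵀ

/-- The block-lower-triangular whitening matrix
`A₀ = [[M_gg^{-1/2}, 0], [−S₂⁻¹ M_hg M_gg⁻¹, S₂⁻¹]]` (S₂ = Schur complement square root),
which turns the factors into ones with zero mean and identity sample covariance while
keeping the transformation block-lower-triangular (so zero h-loadings are preserved). -/
def whiten (hMgg : (Mgg f).PosDef) (hS : (MhhG f).PosDef) :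
    Matrix (Fin (r₁ + r₂)) (Fin (r₁ + r₂)) ℝ :=
  (Matrix.reindex finSumFinEquiv finSumFinEquiv)
    (Matrix.fromBlocks (psdSqrt hMgg.posSemidef)⁻¹ 0
      (-((psdSqrt hS.posSemidef)⁻¹ * Mhg f * (Mgg f)⁻¹)) (psdSqrt hS.posSemidef)⁻¹)

end

/-! The sample covariance factors as `M_ff = L Lᵀ` with the block-lower-triangular
Cholesky-type factor `L = [[M_gg^{1/2}, 0], [M_hg M_gg⁻¹ M_gg^{1/2}, S^{1/2}]]`
(`S` the Schur complement), and `whiten` is `L⁻¹`. With `B = diag(U_g, U_h)` block-diagonal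
orthogonal, diagonalising the two normalisation matrices computed from `Γ L`, take
`A = (L B)⁻¹`. Then `A M_ff Aᵀ = 1` since `B Bᵀ = 1`, and `Γ A⁻¹ = Γ L B` keeps zero
h-loadings because `L B` is again block lower triangular. -/

section General

variable {R : Type*} [CommRing R]

lemma reindex_mul_reindex {m n : Type*} [Fintype m] [Fintype n] (e : m ≃ n)
    (M N : Matrix m m R) : reindex e e M * reindex e e N = reindex e e (M * N) := by
  simp only [reindex_apply, submatrix_mul_equiv]

lemma transpose_mul_smul_mul_mul {ι κ κ' : Type*} [Fintype ι] [Fintype κ]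
    (c : R) (X : Matrix ι κ R) (S : Matrix ι ι R) (U : Matrix κ κ' R) :
    Uᵀ * (c • Xᵀ * S * X) * U = c • (X * U)ᵀ * S * (X * U) := by
  simp only [transpose_mul, smul_mul, Matrix.mul_smul, Matrix.mul_assoc]

lemma inv_mul_mul_transpose_mul_transpose_inv {n : Type*} [Fintype n] [DecidableEq n]
    {C : Matrix n n R} (hC : IsUnit C.det) : C⁻¹ * (C * Cᵀ) * C⁻¹ᵀ = 1 := by
  have hCT : IsUnit Cᵀ.det := by rwa [det_transpose]
  rw [transpose_nonsing_inv, ← Matrix.mul_assoc, nonsing_inv_mul _ hC, Matrix.one_mul,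
    mul_nonsing_inv _ hCT]

lemma mulVec_eq_add_mul_inv_mulVec_sub {m n : Type*} [Fintype n] [DecidableEq n]
    (Γ : Matrix m n R) {A : Matrix n n R} (hA : IsUnit A.det) (x y : n → R) :
    Γ *ᵥ x = Γ *ᵥ y + (Γ * A⁻¹) *ᵥ (A *ᵥ (x - y)) := by
  rw [mulVec_mulVec, Matrix.mul_assoc, nonsing_inv_mul _ hA, Matrix.mul_one, mulVec_sub]
  abel

lemma fromBlocks_cholesky_mul_transpose {m n : Type*} [Fintype m] [Fintype n] [DecidableEq m]
    {P G : Matrix m m R} {Q : Matrix n m R} {H S : Matrix n n R}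
    (hP : IsUnit P.det) (hPT : Pᵀ = P) (hG : G * Gᵀ = P) (hS : S * Sᵀ = H - Q * P⁻¹ * Qᵀ) :
    fromBlocks G 0 (Q * P⁻¹ * G) S * (fromBlocks G 0 (Q * P⁻¹ * G) S)ᵀ =
      fromBlocks P Qᵀ Q H := by
  have hPinvT : P⁻¹ᵀ = P⁻¹ := by rw [transpose_nonsing_inv, hPT]
  have hGG : ∀ X : Matrix m n R, G * (Gᵀ * X) = P * X := fun X => by
    rw [← Matrix.mul_assoc, hG]
  rw [fromBlocks_transpose, fromBlocks_multiply]
  simp only [transpose_zero, Matrix.mul_zero, Matrix.zero_mul, add_zero, transpose_mul,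
    hPinvT, hG, hS, Matrix.mul_assoc, hGG, mul_nonsing_inv_cancel_left _ _ hP,
    nonsing_inv_mul _ hP, Matrix.mul_one, add_sub_cancel]

lemma HasDistinctEigen.exists_diagDistinctDesc_conj {n : ℕ} {X : Matrix (Fin n) (Fin n) ℝ}
    (h : HasDistinctEigen X) : ∃ U : Matrix (Fin n) (Fin n) ℝ,
      U * Uᵀ = 1 ∧ DiagDistinctDesc (Uᵀ * X * U) := by
  obtain ⟨U, d, hUUt, hUtU, hd, rfl⟩ := h
  refine ⟨U, hUUt, d, hd, ?_⟩
  simp only [Matrix.mul_assoc, hUtU, Matrix.mul_one]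
  rw [← Matrix.mul_assoc, hUtU, Matrix.one_mul]

end General

section PsdSqrt

variable {n : Type*} [Fintype n] [DecidableEq n] {A : Matrix n n ℝ}

lemma psdSqrt_mul_self (hA : A.PosSemidef) : psdSqrt hA * psdSqrt hA = A := by
  conv_rhs => rw [hA.1.spectral_theorem, Unitary.conjStarAlgAut_apply]
  have hU : ∀ X : Matrix n n ℝ,
      (star hA.1.eigenvectorUnitary : Matrix n n ℝ) * (hA.1.eigenvectorUnitary * X) = X :=
    fun X => by rw [← Matrix.mul_assoc, Unitary.coe_star_mul_self, Matrix.one_mul]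
  have hD : diagonal ((√·) ∘ hA.1.eigenvalues) * diagonal ((√·) ∘ hA.1.eigenvalues) =
      diagonal (RCLike.ofReal ∘ hA.1.eigenvalues) := by
    rw [diagonal_mul_diagonal]
    exact congrArg diagonal (funext fun i => Real.mul_self_sqrt (hA.eigenvalues_nonneg i))
  simp only [psdSqrt, Matrix.mul_assoc, hU]
  rw [← Matrix.mul_assoc (diagonal _), hD]

lemma psdSqrt_transpose (hA : A.PosSemidef) : (psdSqrt hA)ᵀ = psdSqrt hA := by
  rw [psdSqrt, star_eq_conjTranspose, conjTranspose_eq_transpose_of_trivial]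
  simp [transpose_mul, Matrix.mul_assoc]

lemma isUnit_det_psdSqrt (hA : A.PosDef) : IsUnit (psdSqrt hA.posSemidef).det := by
  have hdet := congrArg det (psdSqrt_mul_self hA.posSemidef)
  rw [det_mul] at hdet
  exact isUnit_iff_ne_zero.mpr fun h => hA.det_pos.ne' (by rw [← hdet, h, zero_mul])

end PsdSqrt

section SampleMoments

variable {T r : ℕ} (f : Fin T → Fin r → ℝ)

lemma Mff_transpose : (Mff f)ᵀ = Mff f := by
  ext a b
  simp only [Mff, transpose_apply, Matrix.smul_apply, Matrix.sum_apply, of_apply, mul_comm]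

lemma sum_mulVec_sub_fbar (A : Matrix (Fin r) (Fin r) ℝ) : ∑ t, A *ᵥ (f t - fbar f) = 0 := by
  rcases Nat.eq_zero_or_pos T with rfl | hT
  · simp
  · rw [← mulVec_sum, Finset.sum_sub_distrib, Finset.sum_const, Finset.card_univ,
      Fintype.card_fin, fbar, ← Nat.cast_smul_eq_nsmul ℝ, smul_smul,
      mul_inv_cancel₀ (Nat.cast_ne_zero.2 hT.ne'), one_smul, sub_self, mulVec_zero]

lemma sampleCov_mulVec_sub_fbar (A : Matrix (Fin r) (Fin r) ℝ) :
    (T : ℝ)⁻¹ • ∑ t, of (fun a b => (A *ᵥ (f t - fbar f)) a * (A *ᵥ (f t - fbar f)) b) =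
      A * Mff f * Aᵀ := by
  have houter : ∀ t, of (fun a b => (A *ᵥ (f t - fbar f)) a * (A *ᵥ (f t - fbar f)) b) =
      A * of (fun a b => (f t a - fbar f a) * (f t b - fbar f b)) * Aᵀ := fun t => by
    ext a b
    simp only [of_apply, mul_apply, transpose_apply, mulVec, dotProduct, Pi.sub_apply]
    rw [Finset.sum_mul_sum, Finset.sum_comm]
    simp only [Finset.sum_mul]
    exact Finset.sum_congr rfl fun c _ => Finset.sum_congr rfl fun d _ => by ring
  simp_rw [houter, ← Finset.sum_mul, ← Finset.mul_sum, Mff, Matrix.mul_smul, Matrix.smul_mul]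

end SampleMoments

section Blocks

variable {R : Type*} [CommRing R] {ι : Type*} {r₁ r₂ : ℕ}

lemma submatrix_castAdd_mul_reindex_fromBlocks (Γ : Matrix ι (Fin (r₁ + r₂)) R)
    (P : Matrix (Fin r₁) (Fin r₁) R) (Q : Matrix (Fin r₁) (Fin r₂) R)
    (R' : Matrix (Fin r₂) (Fin r₁) R) (S : Matrix (Fin r₂) (Fin r₂) R) :
    (Γ * reindex finSumFinEquiv finSumFinEquiv (fromBlocks P Q R' S)).submatrix id
        (Fin.castAdd r₂) =
      Γ.submatrix id (Fin.castAdd r₂) * P + Γ.submatrix id (Fin.natAdd r₁) * R' := by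
  ext i a
  simp only [submatrix_apply, mul_apply, Matrix.add_apply, id_eq]
  rw [← Equiv.sum_comp finSumFinEquiv, Fintype.sum_sum_type]
  simp [reindex_apply]

lemma submatrix_natAdd_mul_reindex_fromBlocks (Γ : Matrix ι (Fin (r₁ + r₂)) R)
    (P : Matrix (Fin r₁) (Fin r₁) R) (Q : Matrix (Fin r₁) (Fin r₂) R)
    (R' : Matrix (Fin r₂) (Fin r₁) R) (S : Matrix (Fin r₂) (Fin r₂) R) :
    (Γ * reindex finSumFinEquiv finSumFinEquiv (fromBlocks P Q R' S)).submatrix id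
        (Fin.natAdd r₁) =
      Γ.submatrix id (Fin.castAdd r₂) * Q + Γ.submatrix id (Fin.natAdd r₁) * S := by
  ext i a
  simp only [submatrix_apply, mul_apply, Matrix.add_apply, id_eq]
  rw [← Equiv.sum_comp finSumFinEquiv, Fintype.sum_sum_type]
  simp [reindex_apply]

lemma mul_reindex_fromBlocks_zero₁₂_natAdd_eq_zero (Γ : Matrix ι (Fin (r₁ + r₂)) R)
    (P : Matrix (Fin r₁) (Fin r₁) R) (R' : Matrix (Fin r₂) (Fin r₁) R)
    (S : Matrix (Fin r₂) (Fin r₂) R) {i : ι} (hi : ∀ a, Γ i (Fin.natAdd r₁ a) = 0)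
    (a : Fin r₂) :
    (Γ * reindex finSumFinEquiv finSumFinEquiv (fromBlocks P 0 R' S)) i (Fin.natAdd r₁ a) =
      0 := by
  have hblock := congrFun (congrFun (submatrix_natAdd_mul_reindex_fromBlocks Γ P 0 R' S) i) a
  simp only [submatrix_apply, id_eq] at hblock
  rw [hblock]
  simp [mul_apply, hi]

end Blocks

section Whitening

variable {T r₁ r₂ : ℕ} (f : Fin T → Fin (r₁ + r₂) → ℝ)

lemma Mgg_transpose : (Mgg f)ᵀ = Mgg f := by
  rw [Mgg, transpose_submatrix, Mff_transpose]

lemma Mff_eq_reindex_fromBlocks : Mff f = reindex finSumFinEquiv finSumFinEquiv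
    (fromBlocks (Mgg f) (Mhg f)ᵀ (Mhg f) (Mhh f)) := by
  ext i j
  obtain ⟨s, rfl⟩ := finSumFinEquiv.surjective i
  obtain ⟨u, rfl⟩ := finSumFinEquiv.surjective j
  have hsym : ∀ a b, Mff f a b = Mff f b a := fun a b => congrFun₂ (Mff_transpose f) b a
  rcases s with s | s <;> rcases u with u | u <;> simp [Mgg, Mhg, Mhh, reindex_apply, hsym]

def cholFactor (hMgg : (Mgg f).PosDef) (hS : (MhhG f).PosDef) :
    Matrix (Fin (r₁ + r₂)) (Fin (r₁ + r₂)) ℝ :=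
  reindex finSumFinEquiv finSumFinEquiv
    (fromBlocks (psdSqrt hMgg.posSemidef) 0 (Mhg f * (Mgg f)⁻¹ * psdSqrt hMgg.posSemidef)
      (psdSqrt hS.posSemidef))

variable {f} (hMgg : (Mgg f).PosDef) (hS : (MhhG f).PosDef)

lemma cholFactor_mul_transpose : cholFactor f hMgg hS * (cholFactor f hMgg hS)ᵀ = Mff f := by
  have hsqrt : ∀ {r} {A : Matrix (Fin r) (Fin r) ℝ} (hA : A.PosDef),
      psdSqrt hA.posSemidef * (psdSqrt hA.posSemidef)ᵀ = A := fun hA => by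
    rw [psdSqrt_transpose, psdSqrt_mul_self]
  rw [cholFactor, transpose_reindex, reindex_mul_reindex,
    fromBlocks_cholesky_mul_transpose (isUnit_iff_ne_zero.2 hMgg.det_pos.ne') (Mgg_transpose f)
      (hsqrt hMgg) (hsqrt hS), Mff_eq_reindex_fromBlocks]

lemma isUnit_det_cholFactor : IsUnit (cholFactor f hMgg hS).det := by
  rw [cholFactor, det_reindex_self, det_fromBlocks_zero₁₂]
  exact (isUnit_det_psdSqrt hMgg).mul (isUnit_det_psdSqrt hS)

lemma inv_whiten : (whiten f hMgg hS)⁻¹ = cholFactor f hMgg hS := by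
  have hG := isUnit_det_psdSqrt hMgg
  suffices whiten f hMgg hS = (cholFactor f hMgg hS)⁻¹ by
    rw [this, nonsing_inv_nonsing_inv _ (isUnit_det_cholFactor hMgg hS)]
  rw [cholFactor, inv_reindex, inv_fromBlocks_zero₁₂_of_isUnit_iff, whiten]
  · simp only [Matrix.mul_assoc, mul_nonsing_inv _ hG, Matrix.mul_one]
  · simp only [isUnit_iff_isUnit_det, hG, isUnit_det_psdSqrt hS]

end Whitening

theorem stmt14_general {T m r₁ r₂ : ℕ} (f : Fin T → Fin (r₁ + r₂) → ℝ)
    (Γ : Matrix (Fin m) (Fin (r₁ + r₂)) ℝ) (Sg : Matrix (Fin m) (Fin m) ℝ)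
    (hMgg : (Mgg f).PosDef) (hS : (MhhG f).PosDef)
    -- genericity: the two symmetric matrices arising after the whitening step
    -- have distinct eigenvalues
    (hg : HasDistinctEigen ((m : ℝ)⁻¹ •
      ((Γ * (whiten f hMgg hS)⁻¹).submatrix id (Fin.castAdd r₂))ᵀ * Sg⁻¹ *
        ((Γ * (whiten f hMgg hS)⁻¹).submatrix id (Fin.castAdd r₂))))
    (hh : HasDistinctEigen ((m : ℝ)⁻¹ •
      ((Γ * (whiten f hMgg hS)⁻¹).submatrix id (Fin.natAdd r₁))ᵀ * Sg⁻¹ *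
        ((Γ * (whiten f hMgg hS)⁻¹).submatrix id (Fin.natAdd r₁)))) :
    ∃ A : Matrix (Fin (r₁ + r₂)) (Fin (r₁ + r₂)) ℝ, IsUnit A.det ∧
      -- (i) the common component is unchanged
      (∀ t, Γ.mulVec (f t) =
        Γ.mulVec (fbar f) + (Γ * A⁻¹).mulVec (A.mulVec (f t - fbar f))) ∧
      -- (ii) zero h-block rows (the y-equation loadings) stay zero
      (∀ i : Fin m, (∀ a : Fin r₂, Γ i (Fin.natAdd r₁ a) = 0) →
        ∀ a : Fin r₂, (Γ * A⁻¹) i (Fin.natAdd r₁ a) = 0) ∧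
      -- (iii) zero sample mean and identity sample covariance of the new factors
      (∑ t, A.mulVec (f t - fbar f)) = 0 ∧
      ((T : ℝ)⁻¹ • ∑ t, Matrix.of (fun a b =>
          A.mulVec (f t - fbar f) a * A.mulVec (f t - fbar f) b)
        = (1 : Matrix (Fin (r₁ + r₂)) (Fin (r₁ + r₂)) ℝ)) ∧
      -- (iv) the IZ diagonality normalizations hold for the new loadings
      DiagDistinctDesc ((m : ℝ)⁻¹ •
        ((Γ * A⁻¹).submatrix id (Fin.castAdd r₂))ᵀ * Sg⁻¹ *
          ((Γ * A⁻¹).submatrix id (Fin.castAdd r₂))) ∧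
      DiagDistinctDesc ((m : ℝ)⁻¹ •
        ((Γ * A⁻¹).submatrix id (Fin.natAdd r₁))ᵀ * Sg⁻¹ *
          ((Γ * A⁻¹).submatrix id (Fin.natAdd r₁))) := by
  obtain ⟨Ug, hUg, hdiag_g⟩ := HasDistinctEigen.exists_diagDistinctDesc_conj hg
  obtain ⟨Uh, hUh, hdiag_h⟩ := HasDistinctEigen.exists_diagDistinctDesc_conj hh
  set B := reindex finSumFinEquiv finSumFinEquiv (fromBlocks Ug 0 0 Uh)
  have hB : B * Bᵀ = 1 := by
    rw [transpose_reindex, reindex_mul_reindex, fromBlocks_transpose, fromBlocks_multiply]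
    simp [hUg, hUh]
  set C := cholFactor f hMgg hS * B
  have hC : IsUnit C.det := by
    rw [det_mul]
    exact (isUnit_det_cholFactor hMgg hS).mul (isUnit_det_of_right_inverse hB)
  have hCCt : C * Cᵀ = Mff f := by
    rw [transpose_mul, Matrix.mul_assoc, ← Matrix.mul_assoc B, hB, Matrix.one_mul,
      cholFactor_mul_transpose]
  have hΓC : Γ * C⁻¹⁻¹ = Γ * (whiten f hMgg hS)⁻¹ * B := by
    rw [nonsing_inv_nonsing_inv _ hC, inv_whiten, Matrix.mul_assoc]
  refine ⟨C⁻¹, isUnit_nonsing_inv_det_iff.2 hC,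
    fun t => mulVec_eq_add_mul_inv_mulVec_sub Γ (isUnit_nonsing_inv_det_iff.2 hC) _ _,
    ?_, sum_mulVec_sub_fbar f _, ?_, ?_, ?_⟩
  · intro i hi a
    rw [nonsing_inv_nonsing_inv _ hC]
    simpa [C, B, cholFactor, reindex_mul_reindex, fromBlocks_multiply] using mul_reindex_fromBlocks_zero₁₂_natAdd_eq_zero Γ _ _ _ hi a
  · rw [sampleCov_mulVec_sub_fbar, ← hCCt]
    exact inv_mul_mul_transpose_mul_transpose_inv hC
  · rw [hΓC, submatrix_castAdd_mul_reindex_fromBlocks, Matrix.mul_zero, add_zero,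
      ← transpose_mul_smul_mul_mul]
    exact hdiag_g
  · rw [hΓC, submatrix_natAdd_mul_reindex_fromBlocks, Matrix.mul_zero, zero_add,
      ← transpose_mul_smul_mul_mul]
    exact hdiag_h

theorem stmt14 {T m r₁ r₂ : ℕ} (f : Fin T → Fin (r₁ + r₂) → ℝ)
    (Γ : Matrix (Fin m) (Fin (r₁ + r₂)) ℝ) (Sg : Matrix (Fin m) (Fin m) ℝ)
    (hSg : Sg.PosDef) (hM : (Mff f).PosDef)
    (hMgg : (Mgg f).PosDef) (hS : (MhhG f).PosDef)
    -- genericity: the two symmetric matrices arising after the whitening step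
    -- have distinct eigenvalues
    (hg : HasDistinctEigen ((m : ℝ)⁻¹ •
      ((Γ * (whiten f hMgg hS)⁻¹).submatrix id (Fin.castAdd r₂))ᵀ * Sg⁻¹ *
        ((Γ * (whiten f hMgg hS)⁻¹).submatrix id (Fin.castAdd r₂))))
    (hh : HasDistinctEigen ((m : ℝ)⁻¹ •
      ((Γ * (whiten f hMgg hS)⁻¹).submatrix id (Fin.natAdd r₁))ᵀ * Sg⁻¹ *
        ((Γ * (whiten f hMgg hS)⁻¹).submatrix id (Fin.natAdd r₁)))) :
    ∃ A : Matrix (Fin (r₁ + r₂)) (Fin (r₁ + r₂)) ℝ, IsUnit A.det ∧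
      -- (i) the common component is unchanged
      (∀ t, Γ.mulVec (f t) =
        Γ.mulVec (fbar f) + (Γ * A⁻¹).mulVec (A.mulVec (f t - fbar f))) ∧
      -- (ii) zero h-block rows (the y-equation loadings) stay zero
      (∀ i : Fin m, (∀ a : Fin r₂, Γ i (Fin.natAdd r₁ a) = 0) →
        ∀ a : Fin r₂, (Γ * A⁻¹) i (Fin.natAdd r₁ a) = 0) ∧
      -- (iii) zero sample mean and identity sample covariance of the new factors
      (∑ t, A.mulVec (f t - fbar f)) = 0 ∧
      ((T : ℝ)⁻¹ • ∑ t, Matrix.of (fun a b =>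
          A.mulVec (f t - fbar f) a * A.mulVec (f t - fbar f) b)
        = (1 : Matrix (Fin (r₁ + r₂)) (Fin (r₁ + r₂)) ℝ)) ∧
      -- (iv) the IZ diagonality normalizations hold for the new loadings
      DiagDistinctDesc ((m : ℝ)⁻¹ •
        ((Γ * A⁻¹).submatrix id (Fin.castAdd r₂))ᵀ * Sg⁻¹ *
          ((Γ * A⁻¹).submatrix id (Fin.castAdd r₂))) ∧
      DiagDistinctDesc ((m : ℝ)⁻¹ •
        ((Γ * A⁻¹).submatrix id (Fin.natAdd r₁))ᵀ * Sg⁻¹ *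
          ((Γ * A⁻¹).submatrix id (Fin.natAdd r₁))) :=
  stmt14_general f Γ Sg hMgg hS hg hh
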